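/- In the setting of the previous statement, if additionally ν_{f*} is an invariant measure for φ_{f*} (i.e., ν_{f*}(A) = ∫_S Q(A|s, f*(s)) dν_{f*}(s) for all measurable A), then ρ* = r̄(ν_{f*}, φ_{f*}) = ∫_S r(s, f*(s)) dν_{f*}(s), and (ν_{f*}, φ_{f*}) maximizes r̄(ν,φ) over all pairs satisfying F(ν,φ) = ν. -/

import Mathlib

/-!
At an equilibrium `ν = F(ν, φ)` the bias terms cancel: pushing `ν ⊗ φ` through `Q` gives back `ν`,
so `∫ h dQ` and `h` have the same mean and `r̄(ν, φ) = ρ + ∫∫ Φ dφ dν`, where `Φ` is the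
discrepancy of the optimality equation. The AROE gives `Φ ≤ 0` on admissible actions, hence
`r̄(ν, φ) ≤ ρ`, and `Φ = 0` along `f*`, hence `r̄(ν_{f*}, φ_{f*}) = ρ`.
-/

open MeasureTheory ProbabilityTheory

/-- The measurized (deterministic) transition. -/
noncomputable def measurizedF {S U : Type*} [MeasurableSpace S] [MeasurableSpace U]
    (Q : Kernel (S × U) S) (φ : Kernel S U) (ν : Measure S) : Measure S :=
  ν.bind (fun s => (φ s).bind (fun u => Q (s, u)))

/-- The measurized reward `r̄(ν, φ)`. -/
noncomputable def measurizedReward {S U : Type*} [MeasurableSpace S] [MeasurableSpace U]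
    (r : S × U → ℝ) (φ : Kernel S U) (ν : Measure S) : ℝ :=
  ∫ s, ∫ u, r (s, u) ∂(φ s) ∂ν

namespace MeasureTheory.Measure

variable {α β E : Type*} {mα : MeasurableSpace α} {mβ : MeasurableSpace β}
  [NormedAddCommGroup E] {μ : Measure α} {κ : Kernel α β} {g : β → E}

lemma integral_comp_eq_integral_integral [NormedSpace ℝ E] (hg : Integrable g (κ ∘ₘ μ)) :
    ∫ y, g y ∂(κ ∘ₘ μ) = ∫ x, ∫ y, g y ∂κ x ∂μ := by
  rw [comp_eq_comp_const_apply] at hg ⊢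
  simpa using Kernel.integral_comp hg

lemma integrable_integral_of_integrable_comp [NormedSpace ℝ E] (hg : Integrable g (κ ∘ₘ μ)) :
    Integrable (fun x ↦ ∫ y, g y ∂κ x) μ := by
  rw [comp_eq_comp_const_apply] at hg
  simpa using hg.integral_comp

lemma integrable_compProd_fst [SFinite μ] [IsMarkovKernel κ] {f : α → E} (hf : Integrable f μ) :
    Integrable (fun p : α × β ↦ f p.1) (μ ⊗ₘ κ) := by
  rw [← fst_compProd μ κ] at hf
  exact (integrable_map_measure hf.1 measurable_fst.aemeasurable).mp hf

lemma integral_compProd_fst [NormedSpace ℝ E] [SFinite μ] [IsMarkovKernel κ] {f : α → E}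
    (hf : AEStronglyMeasurable f μ) :
    ∫ p, f p.1 ∂(μ ⊗ₘ κ) = ∫ x, f x ∂μ := by
  rw [← fst_compProd μ κ] at hf
  rw [← integral_map measurable_fst.aemeasurable hf, ← Measure.fst, fst_compProd]

end MeasureTheory.Measure

section Measurized

variable {S U : Type*} [MeasurableSpace S] [MeasurableSpace U]

lemma measurizedF_eq_comp_compProd (Q : Kernel (S × U) S) (φ : Kernel S U) [IsSFiniteKernel φ]
    (ν : Measure S) [SFinite ν] :
    measurizedF Q φ ν = Q ∘ₘ (ν ⊗ₘ φ) := by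
  rw [Measure.compProd_eq_comp_prod, Measure.comp_assoc, measurizedF]
  congr with s : 1
  rw [Kernel.comp_apply, Kernel.prod_apply, Kernel.id_apply, Measure.dirac_prod,
    ← Measure.deterministic_comp_eq_map measurable_prodMk_left, Measure.comp_assoc,
    Kernel.comp_deterministic_eq_comap]
  rfl

/-- The AROE says `discrepancy ≤ 0` on admissible actions, with equality along the optimal
selector. -/
noncomputable def discrepancy (Q : Kernel (S × U) S) (r : S × U → ℝ) (ρ : ℝ) (h : S → ℝ)
    (p : S × U) : ℝ :=
  r p + ∫ s', h s' ∂(Q p) - ρ - h p.1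

lemma measurable_discrepancy (Q : Kernel (S × U) S) [IsSFiniteKernel Q] {r : S × U → ℝ}
    (hr : Measurable r) (ρ : ℝ) {h : S → ℝ} (hh : Measurable h) :
    Measurable (discrepancy Q r ρ h) :=
  ((hr.add (hh.stronglyMeasurable.integral_kernel (κ := Q)).measurable).sub_const ρ).sub
    (hh.comp measurable_fst)

theorem measurizedReward_eq_add_integral_discrepancy {Q : Kernel (S × U) S} {φ : Kernel S U}
    [IsMarkovKernel φ] {ν : Measure S} [IsProbabilityMeasure ν] {r : S × U → ℝ} {h : S → ℝ}
    (heq : measurizedF Q φ ν = ν) (hr : Integrable r (ν ⊗ₘ φ)) (hh : Integrable h ν) (ρ : ℝ) :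
    measurizedReward r φ ν = ρ + ∫ s, ∫ u, discrepancy Q r ρ h (s, u) ∂φ s ∂ν := by
  have hcomp : Q ∘ₘ (ν ⊗ₘ φ) = ν := by rw [← measurizedF_eq_comp_compProd, heq]
  have hhcomp : Integrable h (Q ∘ₘ (ν ⊗ₘ φ)) := by rwa [hcomp]
  have hQh : Integrable (fun p ↦ ∫ s', h s' ∂Q p) (ν ⊗ₘ φ) :=
    Measure.integrable_integral_of_integrable_comp hhcomp
  have hh₁ : Integrable (fun p : S × U ↦ h p.1) (ν ⊗ₘ φ) := Measure.integrable_compProd_fst hh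
  have hbias : ∫ p, ∫ s', h s' ∂Q p ∂(ν ⊗ₘ φ) = ∫ p, h p.1 ∂(ν ⊗ₘ φ) := by
    rw [← Measure.integral_comp_eq_integral_integral hhcomp, hcomp,
      Measure.integral_compProd_fst hh.1]
  have hrQh : Integrable (fun p ↦ r p + ∫ s', h s' ∂Q p) (ν ⊗ₘ φ) := hr.add hQh
  have hrQhρ : Integrable (fun p ↦ r p + ∫ s', h s' ∂Q p - ρ) (ν ⊗ₘ φ) :=
    hrQh.sub (integrable_const ρ)
  have hdisc : ∫ p, discrepancy Q r ρ h p ∂(ν ⊗ₘ φ) = ∫ p, r p ∂(ν ⊗ₘ φ) - ρ := by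
    simp only [discrepancy]
    rw [integral_sub hrQhρ hh₁, integral_sub hrQh (integrable_const ρ),
      integral_add hr hQh, hbias, integral_const, probReal_univ, one_smul]
    ring
  rw [measurizedReward, ← Measure.integral_compProd hr,
    ← Measure.integral_compProd (f := discrepancy Q r ρ h) (hrQhρ.sub hh₁), hdisc]
  ring

theorem measurizedReward_le_of_discrepancy_nonpos {Q : Kernel (S × U) S} {φ : Kernel S U}
    [IsMarkovKernel φ] {ν : Measure S} [IsProbabilityMeasure ν] {r : S × U → ℝ} {h : S → ℝ}
    {ρ : ℝ} {A : S → Set U} (hA : ∀ s, MeasurableSet (A s)) (hφA : ∀ s, φ s (A s) = 1)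
    (hdisc : ∀ s, ∀ u ∈ A s, discrepancy Q r ρ h (s, u) ≤ 0)
    (heq : measurizedF Q φ ν = ν) (hr : Integrable r (ν ⊗ₘ φ)) (hh : Integrable h ν) :
    measurizedReward r φ ν ≤ ρ := by
  rw [measurizedReward_eq_add_integral_discrepancy heq hr hh ρ]
  refine add_le_of_nonpos_right (integral_nonpos fun s ↦ integral_nonpos_of_ae ?_)
  have hmem : ∀ᵐ u ∂φ s, u ∈ A s := by
    rw [ae_mem_iff_measure_eq (hA s).nullMeasurableSet, measure_univ]
    exact hφA s
  filter_upwards [hmem] with u hu using hdisc s u hu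

lemma measurizedReward_deterministic {r : S × U → ℝ} (hr : Measurable r) {f : S → U}
    (hf : Measurable f) (ν : Measure S) :
    measurizedReward r (Kernel.deterministic f hf) ν = ∫ s, r (s, f s) ∂ν := by
  refine integral_congr_ae (ae_of_all _ fun s ↦ ?_)
  exact Kernel.integral_deterministic' hf (hr.comp measurable_prodMk_left).stronglyMeasurable

theorem measurizedReward_deterministic_eq_of_discrepancy_eq_zero (Q : Kernel (S × U) S)
    [IsSFiniteKernel Q] {r : S × U → ℝ} (hrm : Measurable r) {ρ : ℝ} {h : S → ℝ}
    (hhm : Measurable h) {f : S → U} (hf : Measurable f)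
    (hdisc : ∀ s, discrepancy Q r ρ h (s, f s) = 0) {ν : Measure S} [IsProbabilityMeasure ν]
    (heq : measurizedF Q (Kernel.deterministic f hf) ν = ν)
    (hr : Integrable r (ν ⊗ₘ Kernel.deterministic f hf)) (hh : Integrable h ν) :
    measurizedReward r (Kernel.deterministic f hf) ν = ρ := by
  have hdisc_meas := measurable_discrepancy Q hrm ρ hhm
  rw [measurizedReward_eq_add_integral_discrepancy heq hr hh ρ]
  have hinner : ∀ s, ∫ u, discrepancy Q r ρ h (s, u) ∂(Kernel.deterministic f hf s) = 0 :=
    fun s ↦ (Kernel.integral_deterministic' hf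
      (hdisc_meas.comp measurable_prodMk_left).stronglyMeasurable).trans (hdisc s)
  simp only [hinner, integral_zero, add_zero]

end Measurized

theorem stmt14_general {S U : Type*} [MeasurableSpace S] [MeasurableSpace U]
    (Q : Kernel (S × U) S) [IsMarkovKernel Q]
    (Uset : S → Set U) (hUm : ∀ s, MeasurableSet (Uset s))
    (r : S × U → ℝ) (hrm : Measurable r) (C : ℝ) (hrb : ∀ p, |r p| ≤ C)
    (ρ : ℝ) (h : S → ℝ) (hhm : Measurable h)
    (hhint : ∀ ν : Measure S, IsProbabilityMeasure ν → Integrable h ν)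
    (f : S → U) (hfm : Measurable f)
    (hsup : ∀ s, ∀ u ∈ Uset s, r (s, u) + ∫ s', h s' ∂(Q (s, u)) ≤ ρ + h s)
    (hsel : ∀ s, ρ + h s = r (s, f s) + ∫ s', h s' ∂(Q (s, f s)))
    (νf : Measure S) [IsProbabilityMeasure νf]
    (hinv : measurizedF Q (Kernel.deterministic f hfm) νf = νf) :
    ρ = measurizedReward r (Kernel.deterministic f hfm) νf ∧
      measurizedReward r (Kernel.deterministic f hfm) νf
        = ∫ s, r (s, f s) ∂νf ∧
      (∀ ν : Measure S, IsProbabilityMeasure ν →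
        ∀ φ : Kernel S U, IsMarkovKernel φ → (∀ s, φ s (Uset s) = 1) →
          measurizedF Q φ ν = ν →
            measurizedReward r φ ν
              ≤ measurizedReward r (Kernel.deterministic f hfm) νf) := by
  have hr : ∀ (μ : Measure (S × U)) [IsFiniteMeasure μ], Integrable r μ := fun μ _ ↦
    .of_bound hrm.aestronglyMeasurable C (ae_of_all _ fun p ↦ (Real.norm_eq_abs _).trans_le (hrb p))
  have hρ : measurizedReward r (Kernel.deterministic f hfm) νf = ρ :=
    measurizedReward_deterministic_eq_of_discrepancy_eq_zero Q hrm hhm hfm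
      (fun s ↦ by simp only [discrepancy]; linarith [hsel s]) hinv (hr _) (hhint νf inferInstance)
  refine ⟨hρ.symm, measurizedReward_deterministic hrm hfm νf, fun ν _ φ _ hφU heq ↦ hρ ▸ ?_⟩
  exact measurizedReward_le_of_discrepancy_nonpos hUm hφU
    (fun s u hu ↦ by simp only [discrepancy]; linarith [hsup s u hu]) heq (hr _) (hhint ν ‹_›)

/-- In the setting of Statement 13, if `ν_{f*}` is invariant
for the kernel `φ_{f*}` concentrated on the optimal selector `f*`, then
`ρ* = r̄(ν_{f*}, φ_{f*}) = ∫ r(s, f*(s)) dν_{f*}(s)` and `(ν_{f*}, φ_{f*})`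
maximizes `r̄(ν, φ)` over all equilibria `F(ν, φ) = ν`. -/
theorem stmt14 {S U : Type*} [MeasurableSpace S] [MeasurableSpace U]
    (Q : Kernel (S × U) S) [IsMarkovKernel Q]
    (Uset : S → Set U) (hUm : ∀ s, MeasurableSet (Uset s))
    (r : S × U → ℝ) (hrm : Measurable r) (C : ℝ) (hrb : ∀ p, |r p| ≤ C)
    (ρ : ℝ) (h : S → ℝ) (hhm : Measurable h)
    (hhint : ∀ ν : Measure S, IsProbabilityMeasure ν → Integrable h ν)
    (hhQ : ∀ p : S × U, Integrable h (Q p))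
    (f : S → U) (hfm : Measurable f) (hff : ∀ s, f s ∈ Uset s)
    (hsup : ∀ s, ∀ u ∈ Uset s, r (s, u) + ∫ s', h s' ∂(Q (s, u)) ≤ ρ + h s)
    (hsel : ∀ s, ρ + h s = r (s, f s) + ∫ s', h s' ∂(Q (s, f s)))
    (νf : Measure S) [IsProbabilityMeasure νf]
    (hinv : measurizedF Q (Kernel.deterministic f hfm) νf = νf) :
    ρ = measurizedReward r (Kernel.deterministic f hfm) νf ∧
      measurizedReward r (Kernel.deterministic f hfm) νf
        = ∫ s, r (s, f s) ∂νf ∧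
      (∀ ν : Measure S, IsProbabilityMeasure ν →
        ∀ φ : Kernel S U, IsMarkovKernel φ → (∀ s, φ s (Uset s) = 1) →
          measurizedF Q φ ν = ν →
            measurizedReward r φ ν
              ≤ measurizedReward r (Kernel.deterministic f hfm) νf) :=
  stmt14_general Q Uset hUm r hrm C hrb ρ h hhm hhint f hfm hsup hsel νf hinv
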